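/- arXiv:math/0003166 — 5 statements merged into one kernel-verified Lean document; each statement's English description precedes it below -/
import Mathlib

section
/- In the octonion algebra, Re((ax)b) = Re(a(xb)) for all octonions a, x, b. -/
open Matrix Quaternion
open scoped Quaternion

noncomputable section

/-- Left real matrix representation of a quaternion in the basis 1, i, j, k. -/
def phi (a : ℍ[ℝ]) : Matrix (Fin 4) (Fin 4) ℝ :=
  !![a.re, -a.imI, -a.imJ, -a.imK;
     a.imI, a.re, -a.imK, a.imJ;
     a.imJ, a.imK, a.re, -a.imI;
     a.imK, -a.imJ, a.imI, a.re]

/-- K = diag(1, -1, -1, -1). -/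
def Kmat : Matrix (Fin 4) (Fin 4) ℝ := Matrix.diagonal ![1, -1, -1, -1]

/-- Right real matrix representation of a quaternion: τ(a) = K φ(a)ᵀ K. -/
def tau (a : ℍ[ℝ]) : Matrix (Fin 4) (Fin 4) ℝ := Kmat * (phi a)ᵀ * Kmat

/-- Coordinate vector of a quaternion in the basis 1, i, j, k. -/
def qvec (x : ℍ[ℝ]) : Fin 4 → ℝ := ![x.re, x.imI, x.imJ, x.imK]

/-- The octonions, as pairs of quaternions via the Cayley–Dickson process. -/
abbrev Octo := ℍ[ℝ] × ℍ[ℝ]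

/-- Octonion multiplication:
  (a' + a''e)(b' + b''e) = (a'b' − b̄''a'') + (b''a' + a'' b̄')e. -/
def Omul (a b : Octo) : Octo :=
  (a.1 * b.1 - star b.2 * a.2, b.2 * a.1 + a.2 * star b.1)

/-- Octonion conjugation. -/
def Oconj (a : Octo) : Octo := (star a.1, -a.2)

/-- Real part of an octonion. -/
def Ore (a : Octo) : ℝ := a.1.re

/-- The octonion 1. -/
def Oone : Octo := (1, 0)

/-- Squared norm of an octonion. -/
def OnormSq (a : Octo) : ℝ := Quaternion.normSq a.1 + Quaternion.normSq a.2

/-- Norm of an octonion. -/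
def Onorm (a : Octo) : ℝ := Real.sqrt (OnormSq a)

/-
With a = (p, q), x = (r, s), b = (t, u), the Cayley–Dickson formula makes both sides equal to
Re(prt) minus the real parts of three further triple products of quaternions. These agree term by
term once one knows that Re(xy) = Re(yx) in ℍ, i.e. that the real part of a product of
quaternions is invariant under cyclic permutations of the factors.
-/

theorem Quaternion.re_mul_comm {R : Type*} [CommRing R] (x y : ℍ[R]) :
    (x * y).re = (y * x).re := by
  simp only [re_mul]
  ring

theorem Quaternion.re_mul_mul_cyclic {R : Type*} [CommRing R] (x y z : ℍ[R]) :
    (x * (y * z)).re = (z * (x * y)).re := by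
  rw [← mul_assoc, re_mul_comm]

theorem Ore_Omul (a b : Octo) : Ore (Omul a b) = (a.1 * b.1).re - (star b.2 * a.2).re := by
  simp only [Ore, Omul, re_sub]

theorem Ore_assoc (a x b : Octo) :
    Ore (Omul (Omul a x) b) = Ore (Omul a (Omul x b)) := by
  obtain ⟨p, q⟩ := a
  obtain ⟨r, s⟩ := x
  obtain ⟨t, u⟩ := b
  rw [Ore_Omul, Ore_Omul]
  simp only [Omul, sub_mul, mul_sub, mul_add, star_add, star_mul, star_star, add_mul,
    re_sub, re_add, mul_assoc]
  rw [re_mul_mul_cyclic (star s), re_mul_mul_cyclic (star u) s, re_mul_mul_cyclic (star u) q]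
  ring
end
end

section
/- The octonion norm is multiplicative: |ab| = |a| |b| for all octonions a, b. -/
open Matrix Quaternion
open scoped Quaternion

noncomputable section

/-!
Expanding `|a'b' − b̄''a''|² + |b''a' + a''b̄'|²` with `|x ± y|² = |x|² + |y|² ± 2 Re(x ȳ)`
and multiplicativity of the quaternion norm leaves `|a|²|b|²` plus two cross terms,
`−2 Re(a'b'ā''b'')` and `2 Re(b''a'b'ā'')`. These cancel because `Re(xy) = Re(yx)`.
-/

namespace Quaternion

variable {R : Type*} [CommRing R]

theorem re_mul_comm_s13 (a b : ℍ[R]) : (a * b).re = (b * a).re := by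
  simp only [re_mul]
  ring

theorem normSq_sub (a b : ℍ[R]) :
    normSq (a - b) = normSq a + normSq b - 2 * (a * star b).re := by
  rw [sub_eq_add_neg, normSq_add, normSq_neg, star_neg, mul_neg, re_neg]
  ring

end Quaternion

lemma OnormSq_nonneg (a : Octo) : 0 ≤ OnormSq a :=
  add_nonneg normSq_nonneg normSq_nonneg

lemma OnormSq_Omul (a b : Octo) : OnormSq (Omul a b) = OnormSq a * OnormSq b := by
  obtain ⟨a₁, a₂⟩ := a
  obtain ⟨b₁, b₂⟩ := b
  have cross_terms_eq :
      (a₁ * b₁ * star (star b₂ * a₂)).re = (b₂ * a₁ * star (a₂ * star b₁)).re := by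
    rw [star_mul, star_mul, star_star, star_star, ← mul_assoc, re_mul_comm_s13 _ b₂]
    simp only [mul_assoc]
  simp only [OnormSq, Omul, normSq_sub, normSq_add, map_mul, normSq_star, cross_terms_eq]
  ring

theorem Onorm_mul (a b : Octo) : Onorm (Omul a b) = Onorm a * Onorm b := by
  rw [Onorm, Onorm, Onorm, OnormSq_Omul, Real.sqrt_mul (OnormSq_nonneg a)]
end
end

section
/- Define the left matrix representation ω : 𝕆 → M₈(ℝ) of an octonion a = a' + a''e (with a', a'' ∈ ℍ) by the block matrix ω(a) = [[φ(a'), −τ(a'')K], [φ(a'')K, τ(a')]] where K = diag(1,-1,-1,-1). Then for all a, x ∈ 𝕆, identifying x with its coordinate vector x⃗ ∈ ℝ⁸ in the basis 1, e₁, …, e₇: (ax)⃗ = ω(a) x⃗. -/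
open Matrix Quaternion
open scoped Quaternion

noncomputable section

/-- Left real matrix representation of an octonion a = a' + a''e:
  ω(a) = [[φ(a'), −τ(a'')K], [φ(a'')K, τ(a')]]. -/
def omega (a : Octo) : Matrix (Fin 4 ⊕ Fin 4) (Fin 4 ⊕ Fin 4) ℝ :=
  Matrix.fromBlocks (phi a.1) (-(tau a.2 * Kmat)) (phi a.2 * Kmat) (tau a.1)

/-- Coordinate vector of an octonion in the basis 1, e₁, …, e₇. -/
def ovec (x : Octo) : Fin 4 ⊕ Fin 4 → ℝ := Sum.elim (qvec x.1) (qvec x.2)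

/-! In coordinates, left multiplication by a quaternion `a` is `φ(a)`, right multiplication is
`τ(a)` and conjugation is `K`; since `qvec` is additive, the two components of the Cayley–Dickson
product `(a'x' − x̄''a'', x''a' + a''x̄')` are exactly the two block rows of `ω(a) x⃗`. -/

lemma qvec_add (x y : ℍ[ℝ]) : qvec (x + y) = qvec x + qvec y := by
  ext i; fin_cases i <;> simp [qvec]

lemma qvec_sub (x y : ℍ[ℝ]) : qvec (x - y) = qvec x - qvec y := by
  ext i; fin_cases i <;> simp [qvec]

lemma qvec_star (x : ℍ[ℝ]) : qvec (star x) = Kmat *ᵥ qvec x := by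
  ext i; fin_cases i <;> simp [qvec, Kmat, mulVec_diagonal]

lemma qvec_mul_eq_phi_mulVec (a x : ℍ[ℝ]) : qvec (a * x) = phi a *ᵥ qvec x := by
  ext i; fin_cases i <;> simp [qvec, phi, mulVec, dotProduct, Fin.sum_univ_four] <;> ring

lemma qvec_mul_eq_tau_mulVec (a x : ℍ[ℝ]) : qvec (x * a) = tau a *ᵥ qvec x := by
  ext i
  fin_cases i <;>
    simp [qvec, tau, phi, Kmat, mulVec, dotProduct, Fin.sum_univ_four, mul_apply] <;> ring

theorem ovec_omul (a x : Octo) : ovec (Omul a x) = omega a *ᵥ ovec x := by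
  obtain ⟨a₁, a₂⟩ := a
  obtain ⟨x₁, x₂⟩ := x
  rw [omega, fromBlocks_mulVec, ovec, ovec, Sum.elim_comp_inl, Sum.elim_comp_inr, Omul,
    qvec_sub, qvec_add, qvec_mul_eq_phi_mulVec a₁, qvec_mul_eq_tau_mulVec a₂, qvec_star,
    qvec_mul_eq_tau_mulVec a₁, qvec_mul_eq_phi_mulVec a₂, qvec_star, mulVec_mulVec, mulVec_mulVec,
    neg_mulVec, sub_eq_add_neg, add_comm (tau a₁ *ᵥ _)]
end
end

section
/- Although ω is not multiplicative, it satisfies ω(a²) = ω(a)² for every octonion a, and likewise the right representation ν satisfies ν(a²) = ν(a)², and ω(a)ν(a) = ν(a)ω(a). -/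
open Matrix Quaternion
open scoped Quaternion

noncomputable section

/-- Right real matrix representation of an octonion a = a' + a''e,
  characterized by (xa)⃗ = ν(a) x⃗:
  ν(a) = [[τ(a'), −φ(ā'')], [φ(a''), τ(ā')]]. -/
def nuO (a : Octo) : Matrix (Fin 4 ⊕ Fin 4) (Fin 4 ⊕ Fin 4) ℝ :=
  Matrix.fromBlocks (tau a.1) (-(phi (star a.2))) (phi a.2) (tau (star a.1))

/-!
ω(a) and ν(a) are the matrices of the maps x ↦ ax and x ↦ xa in the coordinates `ovec`, which
reach every vector. So each of the three matrix identities is the coordinate form of an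
identity of octonion multiplication: left alternativity a(ax) = (aa)x, right alternativity
(xa)a = x(aa), and flexibility a(xa) = (ax)a.
-/

lemma qvec_surjective : Function.Surjective qvec := fun f =>
  ⟨⟨f 0, f 1, f 2, f 3⟩, by ext i; fin_cases i <;> rfl⟩

lemma ovec_surjective : Function.Surjective ovec := fun f =>
  let ⟨x, hx⟩ := qvec_surjective (f ∘ Sum.inl)
  let ⟨y, hy⟩ := qvec_surjective (f ∘ Sum.inr)
  ⟨(x, y), by ext (i | i) <;> simp [ovec, hx, hy]⟩

lemma ext_of_mulVec_ovec {M N : Matrix (Fin 4 ⊕ Fin 4) (Fin 4 ⊕ Fin 4) ℝ}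
    (h : ∀ x, M *ᵥ ovec x = N *ᵥ ovec x) : M = N :=
  ext_iff_mulVec.2 <| ovec_surjective.forall.2 h

lemma phi_mulVec_qvec (a x : ℍ[ℝ]) : phi a *ᵥ qvec x = qvec (a * x) := by
  ext i; fin_cases i <;> simp [phi, qvec, mulVec, dotProduct, Fin.sum_univ_four] <;> ring

lemma Kmat_mulVec_qvec (x : ℍ[ℝ]) : Kmat *ᵥ qvec x = qvec (star x) := by
  ext i; fin_cases i <;> simp [Kmat, qvec, mulVec, dotProduct, diagonal]

lemma phi_transpose (a : ℍ[ℝ]) : (phi a)ᵀ = phi (star a) := by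
  ext i j; fin_cases i <;> fin_cases j <;> simp [phi]

lemma tau_mulVec_qvec (a x : ℍ[ℝ]) : tau a *ᵥ qvec x = qvec (x * a) := by
  rw [tau, phi_transpose, ← mulVec_mulVec, ← mulVec_mulVec, Kmat_mulVec_qvec,
    phi_mulVec_qvec, Kmat_mulVec_qvec, star_mul, star_star, star_star]

lemma omega_mulVec_ovec (a x : Octo) : omega a *ᵥ ovec x = ovec (Omul a x) := by
  simp only [omega, ovec, Omul, fromBlocks_mulVec, Sum.elim_comp_inl, Sum.elim_comp_inr,
    ← mulVec_mulVec, neg_mulVec, Kmat_mulVec_qvec, phi_mulVec_qvec, tau_mulVec_qvec]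
  rw [← sub_eq_add_neg, ← qvec_sub, ← qvec_add, add_comm (a.2 * _)]

lemma nuO_mulVec_ovec (a x : Octo) : nuO a *ᵥ ovec x = ovec (Omul x a) := by
  simp only [nuO, ovec, Omul, fromBlocks_mulVec, Sum.elim_comp_inl, Sum.elim_comp_inr,
    neg_mulVec, phi_mulVec_qvec, tau_mulVec_qvec]
  rw [← sub_eq_add_neg, ← qvec_sub, ← qvec_add]

lemma Omul_left_alternative (a x : Octo) : Omul a (Omul a x) = Omul (Omul a a) x := by
  ext <;> simp only [Omul, re_mul, imI_mul, imJ_mul, imK_mul, re_sub, imI_sub, imJ_sub, imK_sub,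
    re_add, imI_add, imJ_add, imK_add, re_star, imI_star, imJ_star, imK_star] <;> ring

lemma Omul_right_alternative (a x : Octo) : Omul (Omul x a) a = Omul x (Omul a a) := by
  ext <;> simp only [Omul, re_mul, imI_mul, imJ_mul, imK_mul, re_sub, imI_sub, imJ_sub, imK_sub,
    re_add, imI_add, imJ_add, imK_add, re_star, imI_star, imJ_star, imK_star] <;> ring

lemma Omul_flexible (a x : Octo) : Omul a (Omul x a) = Omul (Omul a x) a := by
  ext <;> simp only [Omul, re_mul, imI_mul, imJ_mul, imK_mul, re_sub, imI_sub, imJ_sub, imK_sub,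
    re_add, imI_add, imJ_add, imK_add, re_star, imI_star, imJ_star, imK_star] <;> ring

theorem omega_nu_sq_comm (a : Octo) :
    omega (Omul a a) = omega a ^ 2 ∧
    nuO (Omul a a) = nuO a ^ 2 ∧
    omega a * nuO a = nuO a * omega a := by
  refine ⟨ext_of_mulVec_ovec fun x => ?_, ext_of_mulVec_ovec fun x => ?_,
    ext_of_mulVec_ovec fun x => ?_⟩ <;>
    simp only [sq, ← mulVec_mulVec, omega_mulVec_ovec, nuO_mulVec_ovec]
  · rw [Omul_left_alternative]
  · rw [Omul_right_alternative]
  · rw [Omul_flexible]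
end
end

section
/- For all octonions a, b, the representation of aba factors: ω(aba) = ω(a)ω(b)ω(a), where aba denotes the (well-defined by flexibility) product (ab)a = a(ba) and ω is the left 8×8 real matrix representation. -/
/-!
Since `ω(a)` maps the coordinates of `x` to those of `a x`, the claim says that left multiplication
by `(a b) a` is the composite of the left multiplications by `a`, `b`, `a`: this is the left Moufang
identity `((a b) a) x = a (b (a x))` of the octonions, which is checked in quaternion coordinates.
-/

open Matrix Quaternion
open scoped Quaternion

noncomputable section

theorem Omul_left_moufang (a b x : Octo) :
    Omul (Omul (Omul a b) a) x = Omul a (Omul b (Omul a x)) := by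
  simp only [Omul, Prod.mk.injEq, Quaternion.ext_iff, Quaternion.re_mul, Quaternion.imI_mul,
    Quaternion.imJ_mul, Quaternion.imK_mul, Quaternion.re_sub, Quaternion.imI_sub,
    Quaternion.imJ_sub, Quaternion.imK_sub, Quaternion.re_add, Quaternion.imI_add,
    Quaternion.imJ_add, Quaternion.imK_add, Quaternion.re_star, Quaternion.imI_star,
    Quaternion.imJ_star, Quaternion.imK_star]
  refine ⟨⟨?_, ?_, ?_, ?_⟩, ⟨?_, ?_, ?_, ?_⟩⟩ <;> ring

theorem omega_aba (a b : Octo) :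
    omega (Omul (Omul a b) a) = omega a * omega b * omega a := by
  refine ext_of_mulVec_ovec fun x => ?_
  rw [← mulVec_mulVec, ← mulVec_mulVec]
  simp only [omega_mulVec_ovec, Omul_left_moufang]
end
end
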